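/- For every n ≥ 1 and 0 ≤ a ≤ n, the dual map of d_{a,n} composed with the pivotal map satisfies: for all v ∈ V_{n−a}^n, d_{a,n}^*(ev(τ_n · v)) = (−1)^{(n+1)a} d_{n−a,n}(v), where ev : V_{n−a}^n → (V_{n−a}^n)^{**} is the canonical evaluation map, τ_n = ∏_{j=1}^{n−1} K_j^{j(n−j)} acts on V_{n−a}^n, and d_{a,n}^* : (V_{n−a}^n)^{**} → (V_a^n)^* is the transpose of d_{a,n}. -/

import Mathlib

noncomputable section

open scoped TensorProduct

set_option maxHeartbeats 1000000
set_option synthInstance.maxHeartbeats 400000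

/-- The ground field `𝔸 = ℚ(q)`. -/
abbrev A : Type := RatFunc ℚ

/-- The element `q ∈ 𝔸`. -/
def qq : A := RatFunc.X

/-- The set of `a`-element subsets of `{0, 1, …, n-1}` (a model for the
`a`-element subsets of `{1, …, n}`), the basis of `V_a^n`. -/
abbrev BS (n a : ℕ) : Type := {s : Finset ℕ // s ⊆ Finset.range n ∧ s.card = a}

instance BS.fintype (n a : ℕ) : Fintype (BS n a) :=
  Fintype.subtype ((Finset.range n).powerset.filter fun s => s.card = a) (by
    intro s
    simp [Finset.mem_powerset, Finset.mem_filter])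

/-- The fundamental representation `V_a^n`, as the `𝔸`-vector space with basis the
`a`-element subsets of an `n`-element set. -/
abbrev V (n a : ℕ) : Type := BS n a → A

/-- `i₋₁ : V_{a-1}^{n-1} → V_a^n` (here with indices shifted:
`iminus n a : V_a^n → V_{a+1}^{n+1}`), the inclusion of the summand of subsets containing
the new top element `n`. -/
def iminus (n a : ℕ) : V n a →ₗ[A] V (n+1) (a+1) where
  toFun f s := if h : n ∈ s.1 then
      f ⟨s.1.erase n, by
        constructor
        · intro x hx
          have hx' := Finset.mem_erase.mp hx
          have hx2 := s.2.1 hx'.2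
          simp only [Finset.mem_range] at hx2 ⊢
          omega
        · rw [Finset.card_erase_of_mem h, s.2.2]; omega⟩
    else 0
  map_add' f g := by
    funext s
    simp only [Pi.add_apply]
    by_cases h : n ∈ s.1 <;> simp [h]
  map_smul' c f := by
    funext s
    simp only [Pi.smul_apply, smul_eq_mul, RingHom.id_apply]
    by_cases h : n ∈ s.1 <;> simp [h]

/-- `i₀ : V_a^{n-1} → V_a^n` (as `izero n a : V_a^n → V_a^{n+1}`), the inclusion of the
summand of subsets not containing the new top element. -/
def izero (n a : ℕ) : V n a →ₗ[A] V (n+1) a where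
  toFun f s := if h : n ∈ s.1 then 0 else
      f ⟨s.1, by
        refine ⟨fun x hx => ?_, s.2.2⟩
        have hx2 := s.2.1 hx
        simp only [Finset.mem_range] at hx2 ⊢
        rcases Nat.lt_succ_iff_lt_or_eq.mp hx2 with h' | h'
        · exact h'
        · exact absurd (h' ▸ hx) h⟩
  map_add' f g := by
    funext s
    simp only [Pi.add_apply]
    by_cases h : n ∈ s.1 <;> simp [h]
  map_smul' c f := by
    funext s
    simp only [Pi.smul_apply, smul_eq_mul, RingHom.id_apply]
    by_cases h : n ∈ s.1 <;> simp [h]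

/-- `p₋₁ : V_a^n → V_{a-1}^{n-1}` (as `pminus n a : V_{a+1}^{n+1} → V_a^n`), the projection
onto the summand of subsets containing the top element. -/
def pminus (n a : ℕ) : V (n+1) (a+1) →ₗ[A] V n a where
  toFun f t := f ⟨insert n t.1, by
    have hn : n ∉ t.1 := fun h => by
      have := t.2.1 h; simp [Finset.mem_range] at this
    constructor
    · intro x hx
      rcases Finset.mem_insert.mp hx with rfl | hx
      · simp
      · have := t.2.1 hx; simp only [Finset.mem_range] at this ⊢; omega
    · rw [Finset.card_insert_of_notMem hn, t.2.2]⟩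
  map_add' f g := rfl
  map_smul' c f := rfl

/-- `p₀ : V_a^n → V_a^{n-1}` (as `pzero n a : V_a^{n+1} → V_a^n`), the projection onto the
summand of subsets not containing the top element. -/
def pzero (n a : ℕ) : V (n+1) a →ₗ[A] V n a where
  toFun f t := f ⟨t.1, by
    refine ⟨fun x hx => ?_, t.2.2⟩
    have := t.2.1 hx; simp only [Finset.mem_range] at this ⊢; omega⟩
  map_add' f g := rfl
  map_smul' c f := rfl

/-- The diagonal operator on `V_a^n` acting by the scalar `x` on basis subsets containing `m`
and by `y` on those not containing `m`; for `m = n-1` this is `x • i₋₁ p₋₁ + y • i₀ p₀`. -/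
def diagOp (n a m : ℕ) (x y : A) : Module.End A (V n a) where
  toFun f s := (if m ∈ s.1 then x else y) * f s
  map_add' f g := by
    funext s
    simp only [Pi.add_apply]
    ring
  map_smul' c f := by
    funext s
    simp only [Pi.smul_apply, smul_eq_mul, RingHom.id_apply]
    ring

/-- The recursively defined action of the generator `X_i^+` on `V_a^n`
(`XpOp n a i`, where `i` is the literal subscript, `1 ≤ i ≤ n-1`). -/
def XpOp : (n a i : ℕ) → Module.End A (V n a)
  | 0, _, _ => 0
  | 1, _, _ => 0
  | _+2, 0, _ => 0
  | n+2, a+1, i =>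
    if a + 1 = n + 2 then 0
    else if i = n + 1 then
      (iminus (n+1) a) ∘ₗ (izero n a) ∘ₗ (pminus n a) ∘ₗ (pzero (n+1) (a+1))
    else
      (iminus (n+1) a) ∘ₗ (XpOp (n+1) a i) ∘ₗ (pminus (n+1) a)
      + (izero (n+1) (a+1)) ∘ₗ (XpOp (n+1) (a+1) i) ∘ₗ (pzero (n+1) (a+1))

/-- The recursively defined action of the generator `X_i^-` on `V_a^n`. -/
def XmOp : (n a i : ℕ) → Module.End A (V n a)
  | 0, _, _ => 0
  | 1, _, _ => 0
  | _+2, 0, _ => 0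
  | n+2, a+1, i =>
    if a + 1 = n + 2 then 0
    else if i = n + 1 then
      (izero (n+1) (a+1)) ∘ₗ (iminus n a) ∘ₗ (pzero n a) ∘ₗ (pminus (n+1) a)
    else
      (iminus (n+1) a) ∘ₗ (XmOp (n+1) a i) ∘ₗ (pminus (n+1) a)
      + (izero (n+1) (a+1)) ∘ₗ (XmOp (n+1) (a+1) i) ∘ₗ (pzero (n+1) (a+1))

/-- The recursively defined action of the generator `K_i` on `V_a^n`.  The middle factors
`diagOp … 1 q` and `diagOp … q⁻¹ 1` are the operators `i₋₁ p₋₁ + q i₀ p₀` and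
`q⁻¹ i₋₁ p₋₁ + i₀ p₀` of the recursion. -/
def KOp : (n a i : ℕ) → Module.End A (V n a)
  | 0, _, _ => 1
  | 1, _, _ => 1
  | _+2, 0, _ => 1
  | n+2, a+1, i =>
    if a + 1 = n + 2 then 1
    else if i = n + 1 then
      (iminus (n+1) a) ∘ₗ (diagOp (n+1) a n 1 qq) ∘ₗ (pminus (n+1) a)
      + (izero (n+1) (a+1)) ∘ₗ (diagOp (n+1) (a+1) n qq⁻¹ 1) ∘ₗ (pzero (n+1) (a+1))
    else
      (iminus (n+1) a) ∘ₗ (KOp (n+1) a i) ∘ₗ (pminus (n+1) a)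
      + (izero (n+1) (a+1)) ∘ₗ (KOp (n+1) (a+1) i) ∘ₗ (pzero (n+1) (a+1))

/-- The recursively defined action of `K_i⁻¹` on `V_a^n` (the inverse of `KOp`),
given by the same recursion with `q` and `q⁻¹` interchanged. -/
def KinvOp : (n a i : ℕ) → Module.End A (V n a)
  | 0, _, _ => 1
  | 1, _, _ => 1
  | _+2, 0, _ => 1
  | n+2, a+1, i =>
    if a + 1 = n + 2 then 1
    else if i = n + 1 then
      (iminus (n+1) a) ∘ₗ (diagOp (n+1) a n 1 qq⁻¹) ∘ₗ (pminus (n+1) a)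
      + (izero (n+1) (a+1)) ∘ₗ (diagOp (n+1) (a+1) n qq 1) ∘ₗ (pzero (n+1) (a+1))
    else
      (iminus (n+1) a) ∘ₗ (KinvOp (n+1) a i) ∘ₗ (pminus (n+1) a)
      + (izero (n+1) (a+1)) ∘ₗ (KinvOp (n+1) (a+1) i) ∘ₗ (pzero (n+1) (a+1))
/-! ### The quantum group `U_q(sl_n)` by generators and relations.

We present the algebra with `m = n - 1` generators of each kind `K i, K i⁻¹, X i⁺, X i⁻`,
indexed by `i : Fin m` (so `i` corresponds to the subscript `i + 1 ∈ {1, …, n-1}`). -/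

/-- Generators of `U_q(sl_n)` (with `m = n-1`). -/
inductive UqGen (m : ℕ) : Type
  | K : Fin m → UqGen m
  | Kinv : Fin m → UqGen m
  | Xp : Fin m → UqGen m
  | Xm : Fin m → UqGen m

/-- The free `𝔸`-algebra on the generators. -/
abbrev FA (m : ℕ) : Type := FreeAlgebra A (UqGen m)

namespace FA
variable {m : ℕ}
def K (i : Fin m) : FA m := FreeAlgebra.ι A (UqGen.K i)
def Kinv (i : Fin m) : FA m := FreeAlgebra.ι A (UqGen.Kinv i)
def Xp (i : Fin m) : FA m := FreeAlgebra.ι A (UqGen.Xp i)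
def Xm (i : Fin m) : FA m := FreeAlgebra.ι A (UqGen.Xm i)
end FA

/-- The Cartan integers `(i,j)` of type `A_m`: `2` if `i = j`, `-1` if `|i-j| = 1`,
`0` if `|i-j| ≥ 2`. -/
def cart {m : ℕ} (i j : Fin m) : ℤ :=
  if i = j then 2 else if (i : ℕ) + 1 = j ∨ (j : ℕ) + 1 = i then -1 else 0

/-- The defining relations of `U_q(sl_n)`. -/
inductive uqRel (m : ℕ) : FA m → FA m → Prop
  | KKinv (i : Fin m) : uqRel m (FA.K i * FA.Kinv i) 1
  | KinvK (i : Fin m) : uqRel m (FA.Kinv i * FA.K i) 1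
  | KK (i j : Fin m) : uqRel m (FA.K i * FA.K j) (FA.K j * FA.K i)
  | KXp (i j : Fin m) : uqRel m (FA.K i * FA.Xp j) (qq ^ (cart i j) • (FA.Xp j * FA.K i))
  | KXm (i j : Fin m) : uqRel m (FA.K i * FA.Xm j) (qq ^ (-cart i j) • (FA.Xm j * FA.K i))
  | XpXm (i j : Fin m) :
      uqRel m (FA.Xp i * FA.Xm j - FA.Xm j * FA.Xp i)
        (if i = j then (qq - qq⁻¹)⁻¹ • (FA.K i - FA.Kinv i) else 0)
  | XpXp (i j : Fin m) (h : (i : ℕ) + 2 ≤ j ∨ (j : ℕ) + 2 ≤ i) :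
      uqRel m (FA.Xp i * FA.Xp j) (FA.Xp j * FA.Xp i)
  | XmXm (i j : Fin m) (h : (i : ℕ) + 2 ≤ j ∨ (j : ℕ) + 2 ≤ i) :
      uqRel m (FA.Xm i * FA.Xm j) (FA.Xm j * FA.Xm i)
  | serreP (i j : Fin m) (h : (i : ℕ) + 1 = j ∨ (j : ℕ) + 1 = i) :
      uqRel m (FA.Xp i ^ 2 * FA.Xp j - (qq + qq⁻¹) • (FA.Xp i * FA.Xp j * FA.Xp i)
        + FA.Xp j * FA.Xp i ^ 2) 0
  | serreM (i j : Fin m) (h : (i : ℕ) + 1 = j ∨ (j : ℕ) + 1 = i) :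
      uqRel m (FA.Xm i ^ 2 * FA.Xm j - (qq + qq⁻¹) • (FA.Xm i * FA.Xm j * FA.Xm i)
        + FA.Xm j * FA.Xm i ^ 2) 0

/-- The quantum group `U_q(sl_{m+1})`, presented by generators and relations.
For `U_q(sl_n)` take `m = n - 1`. -/
abbrev Uq (m : ℕ) : Type := RingQuot (uqRel m)

namespace Uq
variable {m : ℕ}
/-- The generator `K_{i+1}` of `U_q(sl_n)`. -/
def K (i : Fin m) : Uq m := RingQuot.mkAlgHom A (uqRel m) (FA.K i)
/-- The generator `K_{i+1}⁻¹` of `U_q(sl_n)`. -/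
def Kinv (i : Fin m) : Uq m := RingQuot.mkAlgHom A (uqRel m) (FA.Kinv i)
/-- The generator `X_{i+1}^+` of `U_q(sl_n)`. -/
def Xp (i : Fin m) : Uq m := RingQuot.mkAlgHom A (uqRel m) (FA.Xp i)
/-- The generator `X_{i+1}^-` of `U_q(sl_n)`. -/
def Xm (i : Fin m) : Uq m := RingQuot.mkAlgHom A (uqRel m) (FA.Xm i)
end Uq
/-! ### The duality maps `d_{a,n}`, triple invariants, and the pivotal elements `τ`. -/

/-- The sum-of-coefficients functional on `V_a^n`. -/
def sumF (n a : ℕ) : V n a →ₗ[A] A where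
  toFun f := ∑ s : BS n a, f s
  map_add' f g := by simp [Finset.sum_add_distrib]
  map_smul' c f := by simp [Finset.mul_sum]

/-- The "trivial" map `V_a^n → (V_c^n)^*`; when `V_a^n` and `V_c^n` are one-dimensional
(`a = 0` or `a = n`, and correspondingly for `c`) it sends the basis vector to the dual
basis vector.  Used for the base cases of `d_{a,n}`. -/
def dtriv (n a c : ℕ) : V n a →ₗ[A] Module.Dual A (V n c) :=
  LinearMap.smulRight (sumF n a) (sumF n c)

/-- The map `d_{a,n} : V_a^n → (V_{n-a}^n)^*`, defined recursively by
`d_{a,n} = i₀ ∘ d_{a-1,n-1} ∘ p₋₁ + (-q)^{-a} i₋₁ ∘ d_{a,n-1} ∘ p₀`, with both base cases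
sending the basis vector to the dual basis vector.  Here `dmap n a c` has target
`(V_c^n)^*`, to be used with `c = n - a`. -/
def dmap : (n a c : ℕ) → (V n a →ₗ[A] Module.Dual A (V n c))
  | 0, a, c => dtriv 0 a c
  | n+1, 0, c => dtriv (n+1) 0 c
  | n+1, a+1, c =>
    if a + 1 = n + 1 then dtriv (n+1) (a+1) c
    else
      match c with
      | 0 => 0
      | c+1 =>
        (pzero n (c+1)).dualMap ∘ₗ (dmap n a (c+1)) ∘ₗ (pminus n a)
        + ((-qq) ^ (a+1))⁻¹ •
            ((pminus n c).dualMap ∘ₗ (dmap n (a+1) c) ∘ₗ (pzero n (a+1)))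

section voutvin

open TensorProduct

/-- First term of the recursion for `v_out`: `(-1)^c q^{b+c} (i₋₁ ⊗ i₀ ⊗ i₀)`. -/
def vterm1 (n a b c : ℕ) (v : V n a ⊗[A] (V n b ⊗[A] V n c)) :
    V (n+1) (a+1) ⊗[A] (V (n+1) b ⊗[A] V (n+1) c) :=
  ((-1 : A)^c * qq^(b+c)) •
    (TensorProduct.map (iminus n a) (TensorProduct.map (izero n b) (izero n c)) v)

/-- Second term of the recursion for `v_out`: `(-1)^a q^c (i₀ ⊗ i₋₁ ⊗ i₀)`. -/
def vterm2 (n a b c : ℕ) (v : V n a ⊗[A] (V n b ⊗[A] V n c)) :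
    V (n+1) a ⊗[A] (V (n+1) (b+1) ⊗[A] V (n+1) c) :=
  ((-1 : A)^a * qq^c) •
    (TensorProduct.map (izero n a) (TensorProduct.map (iminus n b) (izero n c)) v)

/-- Third term of the recursion for `v_out`: `(-1)^b (i₀ ⊗ i₀ ⊗ i₋₁)`. -/
def vterm3 (n a b c : ℕ) (v : V n a ⊗[A] (V n b ⊗[A] V n c)) :
    V (n+1) a ⊗[A] (V (n+1) b ⊗[A] V (n+1) (c+1)) :=
  ((-1 : A)^b) •
    (TensorProduct.map (izero n a) (TensorProduct.map (izero n b) (iminus n c)) v)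

/-- The triple invariant `v_out^n_{a,b,c} ∈ V_a^n ⊗ V_b^n ⊗ V_c^n` (intended for
`a + b + c = n`), defined by the recursion of Definition `defn:trivalent-vertices`,
omitting any term with a negative subscript. -/
def voutE : (n a b c : ℕ) → V n a ⊗[A] (V n b ⊗[A] V n c)
  | 0, _, _, _ => (fun _ => (1:A)) ⊗ₜ[A] ((fun _ => (1:A)) ⊗ₜ[A] (fun _ => (1:A)))
  | n+1, 0, 0, 0 => 0
  | n+1, a+1, 0, 0 => vterm1 n a 0 0 (voutE n a 0 0)
  | n+1, 0, b+1, 0 => vterm2 n 0 b 0 (voutE n 0 b 0)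
  | n+1, 0, 0, c+1 => vterm3 n 0 0 c (voutE n 0 0 c)
  | n+1, a+1, b+1, 0 =>
      vterm1 n a (b+1) 0 (voutE n a (b+1) 0) + vterm2 n (a+1) b 0 (voutE n (a+1) b 0)
  | n+1, a+1, 0, c+1 =>
      vterm1 n a 0 (c+1) (voutE n a 0 (c+1)) + vterm3 n (a+1) 0 c (voutE n (a+1) 0 c)
  | n+1, 0, b+1, c+1 =>
      vterm2 n 0 b (c+1) (voutE n 0 b (c+1)) + vterm3 n 0 (b+1) c (voutE n 0 (b+1) c)
  | n+1, a+1, b+1, c+1 =>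
      vterm1 n a (b+1) (c+1) (voutE n a (b+1) (c+1))
      + vterm2 n (a+1) b (c+1) (voutE n (a+1) b (c+1))
      + vterm3 n (a+1) (b+1) c (voutE n (a+1) (b+1) c)

/-- First term of the recursion for `v_in`: `(-1)^c (…) ∘ (p₋₁ ⊗ p₀ ⊗ p₀)`. -/
def wterm1 (n a b c : ℕ) (φ : V n a ⊗[A] (V n b ⊗[A] V n c) →ₗ[A] A) :
    V (n+1) (a+1) ⊗[A] (V (n+1) b ⊗[A] V (n+1) c) →ₗ[A] A :=
  ((-1 : A)^c) •
    (φ ∘ₗ TensorProduct.map (pminus n a) (TensorProduct.map (pzero n b) (pzero n c)))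

/-- Second term of the recursion for `v_in`: `(-1)^a q^{-a} (…) ∘ (p₀ ⊗ p₋₁ ⊗ p₀)`. -/
def wterm2 (n a b c : ℕ) (φ : V n a ⊗[A] (V n b ⊗[A] V n c) →ₗ[A] A) :
    V (n+1) a ⊗[A] (V (n+1) (b+1) ⊗[A] V (n+1) c) →ₗ[A] A :=
  ((-1 : A)^a * (qq^a)⁻¹) •
    (φ ∘ₗ TensorProduct.map (pzero n a) (TensorProduct.map (pminus n b) (pzero n c)))

/-- Third term of the recursion for `v_in`: `(-1)^b q^{-a-b} (…) ∘ (p₀ ⊗ p₀ ⊗ p₋₁)`. -/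
def wterm3 (n a b c : ℕ) (φ : V n a ⊗[A] (V n b ⊗[A] V n c) →ₗ[A] A) :
    V (n+1) a ⊗[A] (V (n+1) b ⊗[A] V (n+1) (c+1)) →ₗ[A] A :=
  ((-1 : A)^b * (qq^(a+b))⁻¹) •
    (φ ∘ₗ TensorProduct.map (pzero n a) (TensorProduct.map (pzero n b) (pminus n c)))

/-- The triple coinvariant `v_in^n_{a,b,c} : V_a^n ⊗ V_b^n ⊗ V_c^n → 𝔸` (intended for
`a + b + c = n`), defined recursively, omitting any term with a negative subscript. -/
def vinE : (n a b c : ℕ) → (V n a ⊗[A] (V n b ⊗[A] V n c) →ₗ[A] A)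
  | 0, a, b, c =>
      (LinearMap.mul' A A) ∘ₗ
        TensorProduct.map (sumF 0 a)
          ((LinearMap.mul' A A) ∘ₗ TensorProduct.map (sumF 0 b) (sumF 0 c))
  | n+1, 0, 0, 0 => 0
  | n+1, a+1, 0, 0 => wterm1 n a 0 0 (vinE n a 0 0)
  | n+1, 0, b+1, 0 => wterm2 n 0 b 0 (vinE n 0 b 0)
  | n+1, 0, 0, c+1 => wterm3 n 0 0 c (vinE n 0 0 c)
  | n+1, a+1, b+1, 0 =>
      wterm1 n a (b+1) 0 (vinE n a (b+1) 0) + wterm2 n (a+1) b 0 (vinE n (a+1) b 0)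
  | n+1, a+1, 0, c+1 =>
      wterm1 n a 0 (c+1) (vinE n a 0 (c+1)) + wterm3 n (a+1) 0 c (vinE n (a+1) 0 c)
  | n+1, 0, b+1, c+1 =>
      wterm2 n 0 b (c+1) (vinE n 0 b (c+1)) + wterm3 n 0 (b+1) c (vinE n 0 (b+1) c)
  | n+1, a+1, b+1, c+1 =>
      wterm1 n a (b+1) (c+1) (vinE n a (b+1) (c+1))
      + wterm2 n (a+1) b (c+1) (vinE n (a+1) b (c+1))
      + wterm3 n (a+1) (b+1) c (vinE n (a+1) (b+1) c)

end voutvin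

/-- The operator `∏_{j=1}^{n-1} K_j^j` on `V_a^n`. -/
def kjOp (n a : ℕ) : Module.End A (V n a) :=
  (List.ofFn fun i : Fin (n-1) => (KOp n a ((i : ℕ)+1)) ^ ((i : ℕ)+1)).prod

/-- The pivotal operator `τ_n = ∏_{j=1}^{n-1} K_j^{j(n-j)}` on `V_a^n`. -/
def tauOp (n a : ℕ) : Module.End A (V n a) :=
  (List.ofFn fun i : Fin (n-1) => (KOp n a ((i : ℕ)+1)) ^ (((i : ℕ)+1) * (n - ((i : ℕ)+1)))).prod

/-- The inverse pivotal operator `τ_n⁻¹ = ∏_{j=1}^{n-1} K_j^{-j(n-j)}` on `V_a^n`. -/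
def tauinvOp (n a : ℕ) : Module.End A (V n a) :=
  (List.ofFn fun i : Fin (n-1) => (KinvOp n a ((i : ℕ)+1)) ^ (((i : ℕ)+1) * (n - ((i : ℕ)+1)))).prod

/-- The element `τ_n = ∏_{j=1}^{n-1} K_j^{j(n-j)} ∈ U_q(sl_n)`. -/
def tauU (n : ℕ) : Uq (n-1) :=
  (List.ofFn fun i : Fin (n-1) => (Uq.K i) ^ (((i : ℕ)+1) * (n - ((i : ℕ)+1)))).prod

/-- The Cartan integers for literal subscripts `i, j ∈ {1, …, n-1}`. -/
def cartN (i j : ℕ) : ℤ :=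
  if i = j then 2 else if i + 1 = j ∨ j + 1 = i then -1 else 0

/-!
Unwinding its recursion, `d_{a,n}` pairs the basis vector of an `a`-subset `T ⊆ {0, …, n-1}`
only with that of its complement `Tᶜ`, with coefficient `(-q)^{-inv T}`, where `inv T` counts
the pairs `t < j` with `t ∈ T`, `j ∉ T`. Every `K_j` acts diagonally, and summation by parts
against `j (n - j)` shows that `τ_n` multiplies the basis vector of `S` by
`q^{∑_{s ∈ S} (2s + 1 - n)}`. Comparing coefficients, the theorem reduces to
`inv T - inv Tᶜ = ∑_{s ∈ Tᶜ} (2s + 1 - n)`, obtained by counting, for each `j`, the elements of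
`Tᶜ` below `j`; the parity of this difference gives the sign `(-1)^{(n+1)a}`.
-/

open Finset

lemma qq_ne_zero : qq ≠ 0 := RatFunc.X_ne_zero

lemma BS.apply_congr {n a : ℕ} (f : V n a) {s t : BS n a} (h : s.1 = t.1) : f s = f t :=
  congrArg f (Subtype.ext h)

lemma BS.val_eq_range {n : ℕ} (s : BS n n) : s.1 = range n :=
  eq_of_subset_of_card_le s.2.1 (by rw [card_range, s.2.2])

instance BS.subsingleton_zero (n : ℕ) : Subsingleton (BS n 0) :=
  ⟨fun s t => Subtype.ext (by rw [card_eq_zero.mp s.2.2, card_eq_zero.mp t.2.2])⟩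

instance BS.subsingleton_self (n : ℕ) : Subsingleton (BS n n) :=
  ⟨fun s t => Subtype.ext (by rw [BS.val_eq_range s, BS.val_eq_range t])⟩

lemma notMem_of_subset_range {n : ℕ} {t : Finset ℕ} (ht : t ⊆ range n) : n ∉ t :=
  fun h => by simpa using ht h

def BS.compl {n a c : ℕ} (h : a + c = n) (s : BS n a) : BS n c :=
  ⟨range n \ s.1, sdiff_subset, by rw [card_sdiff_of_subset s.2.1, card_range, s.2.2]; omega⟩

@[simp] lemma BS.compl_val {n a c : ℕ} (h : a + c = n) (s : BS n a) :
    (BS.compl h s).1 = range n \ s.1 := rfl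

@[simp] lemma BS.compl_compl {n a c : ℕ} (h : a + c = n) (h' : c + a = n) (T : BS n a) :
    BS.compl h' (BS.compl h T) = T :=
  Subtype.ext (Finset.sdiff_sdiff_eq_self T.2.1)

def BS.complEquiv {n a c : ℕ} (h : a + c = n) : BS n a ≃ BS n c where
  toFun := BS.compl h
  invFun := BS.compl (by omega)
  left_inv := BS.compl_compl _ _
  right_inv := BS.compl_compl _ _

@[simp] lemma BS.complEquiv_apply {n a c : ℕ} (h : a + c = n) (T : BS n a) :
    BS.complEquiv h T = BS.compl h T := rfl

def BS.splitTop (n a : ℕ) : BS n a ⊕ BS n (a+1) ≃ BS (n+1) (a+1) where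
  toFun
    | .inl t => ⟨insert n t.1, insert_subset (by simp) (t.2.1.trans (by simp)),
        by rw [card_insert_of_notMem (notMem_of_subset_range t.2.1), t.2.2]⟩
    | .inr t => ⟨t.1, t.2.1.trans (by simp), t.2.2⟩
  invFun s :=
    if h : n ∈ s.1 then
      .inl ⟨s.1.erase n, fun x hx => by
          have := s.2.1 (mem_of_mem_erase hx)
          simp only [mem_range] at this ⊢
          exact lt_of_le_of_ne (Nat.lt_succ_iff.mp this) (ne_of_mem_erase hx),
        by rw [card_erase_of_mem h, s.2.2]; rfl⟩
    else
      .inr ⟨s.1, fun x hx => by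
          have := s.2.1 hx
          simp only [mem_range] at this ⊢
          exact lt_of_le_of_ne (Nat.lt_succ_iff.mp this) (fun e => h (e ▸ hx)),
        s.2.2⟩
  left_inv
    | .inl t => by simp [erase_insert (notMem_of_subset_range t.2.1)]
    | .inr t => by simp [notMem_of_subset_range t.2.1]
  right_inv s := by
    by_cases h : n ∈ s.1
    · simp only [dif_pos h]
      exact Subtype.ext (insert_erase h)
    · simp only [dif_neg h]

@[simp] lemma BS.splitTop_inl_val {n a : ℕ} (t : BS n a) :
    (BS.splitTop n a (.inl t)).1 = insert n t.1 := rfl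

@[simp] lemma BS.splitTop_inr_val {n a : ℕ} (t : BS n (a+1)) :
    (BS.splitTop n a (.inr t)).1 = t.1 := rfl

def inversions (n : ℕ) (T : Finset ℕ) : ℕ := ∑ j ∈ range n \ T, #(T ∩ range j)

lemma inversions_insert_top {n : ℕ} (t : Finset ℕ) :
    inversions (n+1) (insert n t) = inversions n t := by
  rw [inversions, range_add_one, insert_sdiff_insert, sdiff_insert_of_notMem notMem_range_self]
  refine sum_congr rfl fun j hj => ?_
  rw [insert_inter_of_notMem]
  simp only [mem_sdiff, mem_range] at hj ⊢
  omega

lemma inversions_of_subset_range {n : ℕ} {t : Finset ℕ} (ht : t ⊆ range n) :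
    inversions (n+1) t = #t + inversions n t := by
  rw [inversions, range_add_one, insert_sdiff_of_notMem _ (notMem_of_subset_range ht),
    sum_insert (by simp), inter_eq_left.mpr ht, inversions]

lemma inversions_empty (n : ℕ) : inversions n ∅ = 0 := by simp [inversions]

lemma inversions_range (n : ℕ) : inversions n (range n) = 0 := by simp [inversions]

lemma dtriv_apply_eq_sum {n a c : ℕ} [Subsingleton (BS n a)] [Subsingleton (BS n c)]
    (h : a + c = n) (hT : ∀ T : BS n a, inversions n T.1 = 0) (f : V n a) (g : V n c) :
    dtriv n a c f g = ∑ T : BS n a, ((-qq) ^ inversions n T.1)⁻¹ * (f T * g (BS.compl h T)) := by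
  change (∑ T, f T) * ∑ U, g U = _
  rw [sum_mul]
  refine sum_congr rfl fun T _ => ?_
  rw [Fintype.sum_subsingleton _ (BS.compl h T), hT]
  simp

lemma dmap_succ_apply {n a c : ℕ} (ha : a ≠ n) (f : V (n+1) (a+1)) (g : V (n+1) (c+1)) :
    dmap (n+1) (a+1) (c+1) f g = dmap n a (c+1) (pminus n a f) (pzero n (c+1) g)
      + ((-qq) ^ (a+1))⁻¹ * dmap n (a+1) c (pzero n (a+1) f) (pminus n c g) := by
  rw [dmap, if_neg (by omega)]
  rfl

theorem dmap_apply_apply {n a c : ℕ} (h : a + c = n) (f : V n a) (g : V n c) :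
    dmap n a c f g = ∑ T : BS n a, ((-qq) ^ inversions n T.1)⁻¹ * (f T * g (BS.compl h T)) := by
  induction n generalizing a c with
  | zero =>
    obtain ⟨rfl, rfl⟩ : a = 0 ∧ c = 0 := by omega
    exact dtriv_apply_eq_sum h (fun T => by rw [card_eq_zero.mp T.2.2, inversions_empty]) f g
  | succ n ih =>
    rcases a with _ | a
    · obtain rfl : c = n + 1 := by omega
      exact dtriv_apply_eq_sum h (fun T => by rw [card_eq_zero.mp T.2.2, inversions_empty]) f g
    rcases c with _ | c
    · obtain rfl : a = n := by omega
      rw [dmap, if_pos rfl]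
      exact dtriv_apply_eq_sum h (fun T => by rw [BS.val_eq_range, inversions_range]) f g
    rw [dmap_succ_apply (by omega), ih (by omega), ih (by omega), mul_sum,
      ← (BS.splitTop n a).sum_comp, Fintype.sum_sum_type]
    congr 1
    · refine sum_congr rfl fun t _ => ?_
      change _ = ((-qq) ^ inversions (n+1) (insert n t.1))⁻¹ * _
      rw [inversions_insert_top]
      refine congrArg₂ _ rfl (congrArg₂ _ rfl (BS.apply_congr g ?_))
      simp [range_add_one, insert_sdiff_insert, sdiff_insert_of_notMem notMem_range_self]
    · refine sum_congr rfl fun t _ => ?_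
      change _ = ((-qq) ^ inversions (n+1) t.1)⁻¹ * _
      rw [inversions_of_subset_range t.2.1, t.2.2, ← mul_assoc, ← mul_inv, ← pow_add]
      refine congrArg₂ _ rfl (congrArg₂ _ rfl (BS.apply_congr g ?_))
      simp [range_add_one, insert_sdiff_of_notMem _ (notMem_of_subset_range t.2.1)]

@[simp] lemma lmul_apply_apply {n a : ℕ} (c f : V n a) (S : BS n a) :
    Algebra.lmul A (V n a) c f S = c S * f S := rfl

lemma diagOp_eq_lmul (n a m : ℕ) (x y : A) :
    diagOp n a m x y = Algebra.lmul A (V n a) (fun S => if m ∈ S.1 then x else y) := rfl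

lemma iminus_lmul_pminus_add_izero_lmul_pzero (n a : ℕ) (c c' : Finset ℕ → A) :
    iminus n a ∘ₗ Algebra.lmul A (V n a) (fun S => c S.1) ∘ₗ pminus n a
      + izero n (a+1) ∘ₗ Algebra.lmul A (V n (a+1)) (fun S => c' S.1) ∘ₗ pzero n (a+1)
      = Algebra.lmul A (V (n+1) (a+1))
          (fun S => if n ∈ S.1 then c (S.1.erase n) else c' S.1) := by
  refine LinearMap.ext fun f => funext fun S => ?_
  by_cases h : n ∈ S.1
  · simp only [LinearMap.add_apply, LinearMap.comp_apply, Pi.add_apply, lmul_apply_apply,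
      iminus, izero, pminus, LinearMap.coe_mk, AddHom.coe_mk, dif_pos h, if_pos h, add_zero]
    exact congrArg₂ _ rfl (BS.apply_congr f (insert_erase h))
  · simp [iminus, izero, pzero, h]

-- Basis subsets are subsets of `{0, …, n-1}`, so `K_i` sees the elements `i - 1` and `i`.
def kWeight (i : ℕ) (s : Finset ℕ) : ℤ :=
  (if i ∈ s then 1 else 0) - (if i - 1 ∈ s then 1 else 0)

lemma kWeight_erase {i m : ℕ} (s : Finset ℕ) (hi : i ≠ m) (hi' : i - 1 ≠ m) :
    kWeight i (s.erase m) = kWeight i s := by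
  simp [kWeight, mem_erase, hi, hi']

lemma lmul_eq_one {n a : ℕ} {c : V n a} (hc : ∀ S, c S = 1) : Algebra.lmul A (V n a) c = 1 := by
  rw [show c = 1 from funext hc, map_one]

theorem KOp_eq_lmul {n i : ℕ} (a : ℕ) (hi : 1 ≤ i) (hin : i < n) :
    KOp n a i = Algebra.lmul A (V n a) (fun S => qq ^ kWeight i S.1) := by
  induction n generalizing a with
  | zero => omega
  | succ n ih =>
    rcases n with _ | k
    · omega
    rcases a with _ | a
    · exact (lmul_eq_one fun S => by simp [card_eq_zero.mp S.2.2, kWeight]).symm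
    rw [KOp]
    by_cases hfull : a + 1 = k + 2
    · rw [if_pos hfull]
      refine (lmul_eq_one fun S => ?_).symm
      have hS : S.1 = range (k+2) := eq_of_subset_of_card_le S.2.1 (by simp [S.2.2, hfull])
      simp [hS, kWeight, show i < k + 2 by omega, show i - 1 < k + 2 by omega]
    rw [if_neg hfull]
    by_cases htop : i = k + 1
    · subst htop
      rw [if_pos rfl, diagOp_eq_lmul, diagOp_eq_lmul,
        iminus_lmul_pminus_add_izero_lmul_pzero (k+1) a (fun s => if k ∈ s then 1 else qq)
          (fun s => if k ∈ s then qq⁻¹ else 1)]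
      congr 1
      funext S
      by_cases h1 : k + 1 ∈ S.1 <;> by_cases h0 : k ∈ S.1 <;> simp [kWeight, h1, h0]
    · rw [if_neg htop, ih a (by omega), ih (a+1) (by omega),
        iminus_lmul_pminus_add_izero_lmul_pzero (k+1) a (fun s => qq ^ kWeight i s)
          (fun s => qq ^ kWeight i s)]
      congr 1
      funext S
      split_ifs
      · rw [kWeight_erase _ htop (by omega)]
      · rfl

lemma prod_zpow_eq_zpow_sum₀ {ι K : Type*} [CommGroupWithZero K] {x : K} (hx : x ≠ 0)
    (s : Finset ι) (f : ι → ℤ) : ∏ i ∈ s, x ^ f i = x ^ ∑ i ∈ s, f i := by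
  classical
  induction s using Finset.induction_on with
  | empty => simp
  | insert i s hi ih => rw [prod_insert hi, sum_insert hi, zpow_add₀ hx, ih]

def tauWeight (n : ℕ) (s : Finset ℕ) : ℤ :=
  ∑ j ∈ range (n-1), (((j+1) * (n-(j+1)) : ℕ) : ℤ) * kWeight (j+1) s

theorem tauOp_eq_lmul (n a : ℕ) :
    tauOp n a = Algebra.lmul A (V n a) (fun S => qq ^ tauWeight n S.1) := by
  set c : Fin (n-1) → V n a := fun i => (fun S => qq ^ kWeight (i+1) S.1) ^ ((i+1) * (n-(i+1)))
  have hK : ∀ i : Fin (n-1), KOp n a (i+1) ^ ((i+1) * (n-(i+1))) = Algebra.lmul A (V n a) (c i) :=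
    fun i => by rw [KOp_eq_lmul a (by omega) (by omega), map_pow]
  rw [tauOp, funext hK]
  change (List.ofFn (Algebra.lmul A (V n a) ∘ c)).prod = _
  rw [← List.map_ofFn, ← map_list_prod, List.prod_ofFn]
  congr 1
  funext S
  simp only [c, prod_apply, Pi.pow_apply, ← zpow_natCast, ← zpow_mul]
  rw [prod_zpow_eq_zpow_sum₀ qq_ne_zero, tauWeight, ← Fin.sum_univ_eq_sum_range]
  simp only [mul_comm, Nat.cast_mul]

lemma sum_mul_kWeight_eq {n : ℕ} {S : Finset ℕ} (hS : S ⊆ range n) {f : ℕ → ℤ}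
    (h0 : f 0 = 0) (hn : f n = 0) :
    ∑ j ∈ range (n-1), f (j+1) * kWeight (j+1) S = ∑ s ∈ S, (f s - f (s+1)) := by
  rcases n with _ | n
  · simp [subset_empty.mp (by simpa using hS)]
  have hsum : ∀ g : ℕ → ℤ, ∑ k ∈ range (n+1), (if k ∈ S then g k else 0) = ∑ s ∈ S, g s :=
    fun g => by rw [sum_ite_mem, inter_eq_right.mpr hS]
  simp only [kWeight, Nat.add_sub_cancel, mul_sub, mul_ite, mul_one, mul_zero, sum_sub_distrib]
  rw [← hsum f, ← hsum (fun s => f (s+1)), sum_range_succ' (fun k => if k ∈ S then f k else 0),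
    sum_range_succ (fun k => if k ∈ S then f (k+1) else 0)]
  simp [h0, hn]

lemma tauWeight_eq_sum {n : ℕ} {S : Finset ℕ} (hS : S ⊆ range n) :
    tauWeight n S = ∑ s ∈ S, (2 * (s : ℤ) + 1 - n) := by
  rw [tauWeight, sum_mul_kWeight_eq (f := fun j => ((j * (n - j) : ℕ) : ℤ)) hS (by simp)
    (by simp)]
  refine sum_congr rfl fun s hs => ?_
  have := mem_range.mp (hS hs)
  push_cast [Nat.cast_sub this.le, Nat.cast_sub (Nat.succ_le_of_lt this)]
  ring

lemma card_inter_range_add_card_sdiff_inter_range {n j : ℕ} (T : Finset ℕ) (hj : j ≤ n) :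
    #(T ∩ range j) + #((range n \ T) ∩ range j) = j := by
  rw [show (range n \ T) ∩ range j = range j \ T by
      ext x
      simp only [mem_inter, mem_sdiff, mem_range]
      exact ⟨fun h => ⟨h.2, h.1.2⟩, fun h => ⟨⟨by omega, h.2⟩, h.1⟩⟩,
    inter_comm, card_inter_add_card_sdiff, card_range]

lemma sum_card_inter_range (n : ℕ) (S : Finset ℕ) :
    ∑ j ∈ range n, #(S ∩ range j) = ∑ s ∈ S, (n - (s+1)) := by
  have hcard : ∀ j, #(S ∩ range j) = ∑ s ∈ S, if s < j then 1 else 0 := fun j => by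
    rw [← card_filter]
    congr 1
    ext
    simp
  have hfilter : ∀ s, #((range n).filter (s < ·)) = n - (s+1) := fun s => by
    rw [show (range n).filter (s < ·) = Ico (s+1) n by ext; simp [and_comm], Nat.card_Ico]
  simp only [hcard, ← hfilter, card_filter]
  exact sum_comm

theorem inversions_sub_inversions_compl {n : ℕ} {T : Finset ℕ} (hT : T ⊆ range n) :
    (inversions n T : ℤ) - inversions n (range n \ T)
      = ∑ s ∈ range n \ T, (2 * (s : ℤ) + 1 - n) := by
  set S := range n \ T
  have hlt : ∀ s ∈ S, s < n := fun s hs => mem_range.mp (sdiff_subset hs)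
  have hinvT : (inversions n T : ℤ) = ∑ j ∈ S, ((j : ℤ) - #(S ∩ range j)) := by
    rw [inversions, Nat.cast_sum]
    refine sum_congr rfl fun j hj => ?_
    have : #(T ∩ range j) + #(S ∩ range j) = j :=
      card_inter_range_add_card_sdiff_inter_range T (hlt j hj).le
    omega
  have hinvS : (inversions n S : ℤ) = ∑ j ∈ T, (#(S ∩ range j) : ℤ) := by
    rw [inversions, Finset.sdiff_sdiff_eq_self hT, Nat.cast_sum]
  have hpairs : ∑ j ∈ S, (#(S ∩ range j) : ℤ) + ∑ j ∈ T, (#(S ∩ range j) : ℤ)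
      = ∑ s ∈ S, ((n : ℤ) - (s + 1)) := by
    rw [sum_sdiff hT, ← Nat.cast_sum, sum_card_inter_range, Nat.cast_sum]
    refine sum_congr rfl fun s hs => ?_
    have := hlt s hs
    omega
  have hsplit : ∑ s ∈ S, (2 * (s : ℤ) + 1 - n)
      = ∑ s ∈ S, (s : ℤ) - ∑ s ∈ S, ((n : ℤ) - (s + 1)) := by
    rw [← sum_sub_distrib]
    exact sum_congr rfl fun s _ => by ring
  rw [hinvT, hinvS, sum_sub_distrib, hsplit, ← hpairs]
  ring

lemma inv_neg_pow_mul_zpow_sub {K : Type*} [Field K] {x : K} (hx : x ≠ 0) {m k e : ℕ}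
    (he : Even (m + k + e)) :
    ((-x) ^ m)⁻¹ * x ^ ((m : ℤ) - k) = (-1) ^ e * ((-x) ^ k)⁻¹ := by
  have hsign : (-1 : K) ^ m = (-1) ^ e * (-1) ^ k := by
    rw [← pow_add, neg_one_pow_eq_pow_mod_two, neg_one_pow_eq_pow_mod_two (n := e + k)]
    obtain ⟨r, hr⟩ := he
    congr 1
    omega
  rw [neg_pow, neg_pow x k, hsign, zpow_sub₀ hx, zpow_natCast, zpow_natCast]
  field_simp
  rw [← pow_mul, mul_comm, pow_mul, neg_one_sq, one_pow]

lemma even_inversions_add_inversions_compl {n : ℕ} {T : Finset ℕ} (hT : T ⊆ range n) :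
    Even (inversions n T + inversions n (range n \ T) + (n+1) * #T) := by
  have hdiff := inversions_sub_inversions_compl hT
  have hTn : #T ≤ n := by simpa using card_le_card hT
  have hsum : ∑ s ∈ range n \ T, (2 * (s : ℤ) + 1 - n)
      = 2 * ∑ s ∈ range n \ T, (s : ℤ) + (n - #T) * (1 - n) := by
    rw [sum_sub_distrib, sum_add_distrib, ← mul_sum, sum_const, sum_const,
      card_sdiff_of_subset hT, card_range, nsmul_eq_mul, nsmul_eq_mul, Nat.cast_sub hTn]
    ring
  obtain ⟨w, hw⟩ := Int.even_mul_succ_self ((n : ℤ) - 1)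
  rw [← Int.even_coe_nat]
  refine ⟨inversions n (range n \ T) + ∑ s ∈ range n \ T, (s : ℤ) + n * #T - w, ?_⟩
  push_cast
  linear_combination hdiff + hsum - hw

theorem inv_neg_qq_pow_mul_zpow_tauWeight {n : ℕ} {T : Finset ℕ} (hT : T ⊆ range n) :
    ((-qq) ^ inversions n T)⁻¹ * qq ^ tauWeight n (range n \ T)
      = (-1) ^ ((n+1) * #T) * ((-qq) ^ inversions n (range n \ T))⁻¹ := by
  rw [tauWeight_eq_sum sdiff_subset, ← inversions_sub_inversions_compl hT]
  exact inv_neg_pow_mul_zpow_sub qq_ne_zero (even_inversions_add_inversions_compl hT)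

theorem statement11_general (n : ℕ) (a : ℕ) (ha : a ≤ n) (v : V n (n-a)) :
    (dmap n a (n-a)).dualMap ((Module.Dual.eval A (V n (n-a))) (tauOp n (n-a) v))
      = ((-1 : A) ^ ((n+1) * a)) • dmap n (n-a) a v := by
  have h : a + (n - a) = n := by omega
  refine LinearMap.ext fun w => ?_
  rw [LinearMap.dualMap_apply, Module.Dual.eval_apply, LinearMap.smul_apply, smul_eq_mul,
    tauOp_eq_lmul, dmap_apply_apply h, dmap_apply_apply (by omega : n - a + a = n),
    ← (BS.complEquiv h).sum_comp, mul_sum]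
  refine sum_congr rfl fun T _ => ?_
  have hT : ((-qq) ^ inversions n T.1)⁻¹ * qq ^ tauWeight n (BS.compl h T).1
      = (-1) ^ ((n+1) * a) * ((-qq) ^ inversions n (BS.compl h T).1)⁻¹ := by
    simpa only [T.2.2, BS.compl_val] using inv_neg_qq_pow_mul_zpow_tauWeight T.2.1
  simp only [lmul_apply_apply, BS.complEquiv_apply, BS.compl_compl]
  linear_combination (v (BS.compl h T) * w T) * hT

/-- for every `n ≥ 1` and `0 ≤ a ≤ n`, for all `v ∈ V_{n-a}^n`,
`d_{a,n}^*(ev(τ_n · v)) = (-1)^{(n+1)a} d_{n-a,n}(v)`, where `ev` is the canonical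
evaluation map into the double dual and `d_{a,n}^*` is the transpose of `d_{a,n}`. -/
theorem statement11 (n : ℕ) (hn : 1 ≤ n) (a : ℕ) (ha : a ≤ n) (v : V n (n-a)) :
    (dmap n a (n-a)).dualMap ((Module.Dual.eval A (V n (n-a))) (tauOp n (n-a) v))
      = ((-1 : A) ^ ((n+1) * a)) • dmap n (n-a) a v :=
  statement11_general n a ha v

end
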